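/- arXiv:1309.7001 — 2 statements merged into one kernel-verified Lean document; each statement's English description precedes it below -/
import Mathlib

section
/- Let a₁, …, a_m be nonzero vectors in ℝ^n and let K denote the composition K = K_m ∘ ⋯ ∘ K₁, where K_j(y) = y - (⟨a_j, y⟩/‖a_j‖²) • a_j. If the vectors a₁, …, a_m span ℝ^n, then for every y ≠ 0 we have ‖K(y)‖ < ‖y‖. -/
/-!
Each step `z ↦ z - (⟪a, z⟫ / ‖a‖²) • a` is the orthogonal projection onto `aᗮ`, so by Pythagoras it
lowers `‖z‖²` by exactly `⟪a, z⟫² / ‖a‖²`. A sweep that preserves `‖y‖` therefore fixes `y` at every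
step, forcing `y` to be orthogonal to every `a j`; when the `a j` span the space, `y = 0`.
-/

open RealInnerProductSpace

section

variable {E : Type*} [NormedAddCommGroup E] [InnerProductSpace ℝ E]

/-- For `a = 0` this is the identity, since `0 / 0 = 0`. -/
noncomputable def kaczmarzStep (a z : E) : E := z - (⟪a, z⟫ / ‖a‖ ^ 2) • a

theorem norm_kaczmarzStep_sq (a z : E) :
    ‖kaczmarzStep a z‖ ^ 2 = ‖z‖ ^ 2 - ⟪a, z⟫ ^ 2 / ‖a‖ ^ 2 := by
  rcases eq_or_ne a 0 with rfl | ha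
  · simp [kaczmarzStep]
  have hna : ‖a‖ ≠ 0 := norm_ne_zero_iff.mpr ha
  rw [kaczmarzStep, norm_sub_sq_real, real_inner_smul_right, norm_smul, mul_pow,
    Real.norm_eq_abs, sq_abs, real_inner_comm]
  field_simp
  ring

theorem norm_kaczmarzStep_le (a z : E) : ‖kaczmarzStep a z‖ ≤ ‖z‖ := by
  refine pow_le_pow_iff_left₀ (norm_nonneg _) (norm_nonneg _) two_ne_zero |>.mp ?_
  rw [norm_kaczmarzStep_sq]
  linarith [div_nonneg (sq_nonneg ⟪a, z⟫) (sq_nonneg ‖a‖)]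

theorem inner_eq_zero_of_norm_kaczmarzStep_eq {a z : E} (h : ‖kaczmarzStep a z‖ = ‖z‖) :
    ⟪a, z⟫ = 0 := by
  have hq : ⟪a, z⟫ ^ 2 / ‖a‖ ^ 2 = 0 := by
    linarith [h ▸ norm_kaczmarzStep_sq a z]
  rcases div_eq_zero_iff.mp hq with hz | ha
  · exact pow_eq_zero_iff two_ne_zero |>.mp hz
  · rw [sq_eq_zero_iff, norm_eq_zero] at ha
    exact ha ▸ inner_zero_left z

theorem kaczmarzStep_of_inner_eq_zero {a z : E} (h : ⟪a, z⟫ = 0) : kaczmarzStep a z = z := by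
  simp [kaczmarzStep, h]

variable {ι : Type*} (a : ι → E)

theorem norm_foldl_kaczmarzStep_le (l : List ι) (z : E) :
    ‖l.foldl (fun z j => kaczmarzStep (a j) z) z‖ ≤ ‖z‖ := by
  induction l generalizing z with
  | nil => rfl
  | cons j l ih => exact (ih _).trans (norm_kaczmarzStep_le (a j) z)

theorem inner_eq_zero_of_norm_foldl_kaczmarzStep_eq {l : List ι} {z : E}
    (h : ‖l.foldl (fun z j => kaczmarzStep (a j) z) z‖ = ‖z‖) : ∀ j ∈ l, ⟪a j, z⟫ = 0 := by
  induction l generalizing z with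
  | nil => simp
  | cons j l ih =>
    rw [List.foldl_cons] at h
    have hstep : ‖kaczmarzStep (a j) z‖ = ‖z‖ :=
      (norm_kaczmarzStep_le (a j) z).antisymm (h ▸ norm_foldl_kaczmarzStep_le a l _)
    have hj := inner_eq_zero_of_norm_kaczmarzStep_eq hstep
    rw [kaczmarzStep_of_inner_eq_zero hj] at h
    exact List.forall_mem_cons.mpr ⟨hj, ih h⟩

theorem eq_zero_of_forall_inner_eq_zero_of_span_eq_top
    (hspan : Submodule.span ℝ (Set.range a) = ⊤) {y : E} (h : ∀ j, ⟪a j, y⟫ = 0) : y = 0 := by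
  have hle : Submodule.span ℝ (Set.range a) ≤ (ℝ ∙ y)ᗮ :=
    Submodule.span_le.mpr <| Set.range_subset_iff.mpr fun j =>
      Submodule.mem_orthogonal_singleton_iff_inner_left.mpr (h j)
  rw [hspan] at hle
  exact inner_self_eq_zero.mp <|
    Submodule.mem_orthogonal_singleton_iff_inner_left.mp (hle Submodule.mem_top)

end

theorem kaczmarz_sweep_strict_contraction_general {n m : ℕ}
    (a : Fin m → EuclideanSpace ℝ (Fin n))
    (hspan : Submodule.span ℝ (Set.range a) = ⊤)
    (y : EuclideanSpace ℝ (Fin n)) (hy : y ≠ 0) :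
    ‖(List.finRange m).foldl
        (fun z j => z - (⟪a j, z⟫ / ‖a j‖ ^ 2) • a j) y‖ < ‖y‖ := by
  refine (norm_foldl_kaczmarzStep_le a _ y).lt_of_ne fun heq => hy ?_
  have horth := inner_eq_zero_of_norm_foldl_kaczmarzStep_eq a heq
  exact eq_zero_of_forall_inner_eq_zero_of_span_eq_top a hspan fun j =>
    horth j (List.mem_finRange j)

theorem kaczmarz_sweep_strict_contraction {n m : ℕ}
    (a : Fin m → EuclideanSpace ℝ (Fin n)) (ha : ∀ j, a j ≠ 0)
    (hspan : Submodule.span ℝ (Set.range a) = ⊤)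
    (y : EuclideanSpace ℝ (Fin n)) (hy : y ≠ 0) :
    ‖(List.finRange m).foldl
        (fun z j => z - (⟪a j, z⟫ / ‖a j‖ ^ 2) • a j) y‖ < ‖y‖ :=
  kaczmarz_sweep_strict_contraction_general a hspan y hy
end

section
/- Let a₁, …, a_m be nonzero vectors spanning ℝ^n and suppose Ax̄ = b, i.e., ⟨a_j, x̄⟩ = b_j for all j. Define one full sweep S(x) by successively applying x ↦ x + ((b_j - ⟨a_j, x⟩)/‖a_j‖²) • a_j for j = 1, …, m. Then for every initial guess x₀, the iterates x_{k+1} = S(x_k) converge to x̄, and moreover x̄ is the unique solution of the system. -/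
open RealInnerProductSpace

/-!
Subtracting the solution `xbar` turns each Kaczmarz step into the orthogonal projection onto the
hyperplane `(a j)ᗮ`, so the sweep becomes `xbar + T (x - xbar)` for the product `T` of these
projections. A vector on which `T` does not strictly decrease the norm lies in every hyperplane,
hence is orthogonal to the span of the rows, hence zero; by compactness of the unit sphere this
gives `‖T‖ < 1`, and the iterates converge geometrically.
-/

open Filter Topology

namespace ContinuousLinearMap

variable {E F : Type*} [NormedAddCommGroup E] [NormedSpace ℝ E] [ProperSpace E]
  [SeminormedAddCommGroup F] [NormedSpace ℝ F]

theorem norm_lt_one_of_norm_apply_lt (T : E →L[ℝ] F) (hT : ∀ v ≠ 0, ‖T v‖ < ‖v‖) :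
    ‖T‖ < 1 := by
  rcases subsingleton_or_nontrivial E with hE | hE
  · simp [opNorm_subsingleton]
  rw [← T.sSup_sphere_eq_norm, (isCompact_sphere 0 1).sSup_lt_iff_of_continuous
    (NormedSpace.sphere_nonempty.mpr zero_le_one) (by fun_prop)]
  intro v hv
  have hv1 : ‖v‖ = 1 := mem_sphere_zero_iff_norm.mp hv
  simpa [hv1] using hT v (by rintro rfl; simp at hv1)

theorem tendsto_iterate_apply_nhds_zero (T : E →L[ℝ] E) (hT : ∀ v ≠ 0, ‖T v‖ < ‖v‖) (v : E) :
    Tendsto (fun k => T^[k] v) atTop (𝓝 0) := by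
  have hpow : Tendsto (fun k => T ^ k) atTop (𝓝 0) :=
    tendsto_pow_atTop_nhds_zero_of_norm_lt_one (T.norm_lt_one_of_norm_apply_lt hT)
  have hpow_apply := ((apply ℝ E v).continuous.tendsto 0).comp hpow
  rw [map_zero] at hpow_apply
  exact hpow_apply.congr fun k => pow_apply_eq_iterate T k v

end ContinuousLinearMap

section ProjectionSweep

variable {𝕜 E ι : Type*} [RCLike 𝕜] [NormedAddCommGroup E] [InnerProductSpace 𝕜 E]
  (K : ι → Submodule 𝕜 E) [∀ i, (K i).HasOrthogonalProjection]

/-- The composite of the orthogonal projections onto `K i`, for `i` running through `l` in order. -/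
noncomputable def projectionSweep : List ι → E →L[𝕜] E
  | [] => ContinuousLinearMap.id 𝕜 E
  | i :: l => (projectionSweep l).comp (K i).starProjection

theorem projectionSweep_apply (l : List ι) (x : E) :
    projectionSweep K l x = l.foldl (fun z i => (K i).starProjection z) x := by
  induction l generalizing x with
  | nil => rfl
  | cons i l ih => exact ih _

theorem norm_projectionSweep_apply_le (l : List ι) (x : E) :
    ‖projectionSweep K l x‖ ≤ ‖x‖ := by
  induction l generalizing x with
  | nil => rfl
  | cons i l ih => exact (ih _).trans ((K i).norm_starProjection_apply_le x)

theorem mem_of_norm_projectionSweep_apply_eq {l : List ι} {x : E}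
    (h : ‖projectionSweep K l x‖ = ‖x‖) : ∀ i ∈ l, x ∈ K i := by
  induction l generalizing x with
  | nil => simp
  | cons i l ih =>
    change ‖projectionSweep K l ((K i).starProjection x)‖ = ‖x‖ at h
    have hPx : ‖(K i).starProjection x‖ = ‖x‖ :=
      le_antisymm ((K i).norm_starProjection_apply_le x)
        (h ▸ norm_projectionSweep_apply_le K l _)
    have hx : x ∈ K i := ((K i).mem_iff_norm_starProjection x).mpr hPx
    rw [(K i).starProjection_eq_self_iff.mpr hx] at h
    exact List.forall_mem_cons.mpr ⟨hx, ih h⟩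

theorem norm_projectionSweep_apply_lt {l : List ι} (hl : ∀ i, i ∈ l) (hK : ⨅ i, K i = ⊥)
    {x : E} (hx : x ≠ 0) : ‖projectionSweep K l x‖ < ‖x‖ := by
  refine (norm_projectionSweep_apply_le K l x).lt_of_ne fun h => hx ?_
  have hmem : x ∈ ⨅ i, K i :=
    Submodule.mem_iInf _ |>.mpr fun i => mem_of_norm_projectionSweep_apply_eq K h i (hl i)
  rwa [hK, Submodule.mem_bot] at hmem

end ProjectionSweep

theorem Submodule.iInf_orthogonal_span_singleton_eq_bot {𝕜 E ι : Type*} [RCLike 𝕜]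
    [NormedAddCommGroup E] [InnerProductSpace 𝕜 E] {a : ι → E}
    (hspan : Submodule.span 𝕜 (Set.range a) = ⊤) : ⨅ i, (𝕜 ∙ a i)ᗮ = ⊥ := by
  rw [Submodule.iInf_orthogonal, ← Submodule.span_range_eq_iSup, hspan,
    Submodule.top_orthogonal_eq_bot]

section Kaczmarz

variable {E ι : Type*} [NormedAddCommGroup E] [InnerProductSpace ℝ E]

theorem kaczmarz_step_add (a xbar y : E) :
    xbar + y + ((⟪a, xbar⟫ - ⟪a, xbar + y⟫) / ‖a‖ ^ 2) • a
      = xbar + (ℝ ∙ a)ᗮ.starProjection y := by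
  rw [Submodule.starProjection_orthogonal_val, Submodule.starProjection_singleton, inner_add_right,
    sub_add_cancel_left, neg_div, neg_smul, RCLike.ofReal_real_eq_id, id]
  abel

theorem foldl_kaczmarz_step_add (a : ι → E) (b : ι → ℝ) {xbar : E}
    (hxbar : ∀ j, ⟪a j, xbar⟫ = b j) (l : List ι) (y : E) :
    l.foldl (fun z j => z + ((b j - ⟪a j, z⟫) / ‖a j‖ ^ 2) • a j) (xbar + y)
      = xbar + projectionSweep (fun j => (ℝ ∙ a j)ᗮ) l y := by
  rw [projectionSweep_apply]
  refine List.foldl_hom (xbar + ·) fun z j => ?_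
  rw [← hxbar, kaczmarz_step_add]

end Kaczmarz

theorem kaczmarz_convergence_general {n m : ℕ}
    (a : Fin m → EuclideanSpace ℝ (Fin n)) (b : Fin m → ℝ)
    (hspan : Submodule.span ℝ (Set.range a) = ⊤)
    (xbar : EuclideanSpace ℝ (Fin n)) (hxbar : ∀ j, ⟪a j, xbar⟫ = b j) :
    (∀ x₀ : EuclideanSpace ℝ (Fin n),
      Filter.Tendsto
        (fun k => (fun x => (List.finRange m).foldl
            (fun z j => z + ((b j - ⟪a j, z⟫) / ‖a j‖ ^ 2) • a j) x)^[k] x₀)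
        Filter.atTop (nhds xbar)) ∧
    (∀ x : EuclideanSpace ℝ (Fin n), (∀ j, ⟪a j, x⟫ = b j) → x = xbar) := by
  have hK := Submodule.iInf_orthogonal_span_singleton_eq_bot hspan
  set T := projectionSweep (fun j => (ℝ ∙ a j)ᗮ) (List.finRange m)
  refine ⟨fun x₀ => ?_, fun x hx => ?_⟩
  · have hconj : Function.Semiconj (xbar + ·) T fun x => (List.finRange m).foldl
        (fun z j => z + ((b j - ⟪a j, z⟫) / ‖a j‖ ^ 2) • a j) x := fun y =>
      (foldl_kaczmarz_step_add a b hxbar (List.finRange m) y).symm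
    have hT := T.tendsto_iterate_apply_nhds_zero
      (fun v hv => norm_projectionSweep_apply_lt _ (List.mem_finRange) hK hv) (x₀ - xbar)
    have hlim := (tendsto_const_nhds (x := xbar)).add hT
    rw [add_zero] at hlim
    refine hlim.congr fun k => ?_
    rw [(hconj.iterate_right k).eq, add_sub_cancel]
  · have hmem : x - xbar ∈ ⨅ j, (ℝ ∙ a j)ᗮ := by
      simp [Submodule.mem_iInf, Submodule.mem_orthogonal_singleton_iff_inner_right,
        inner_sub_right, hx, hxbar]
    rwa [hK, Submodule.mem_bot, sub_eq_zero] at hmem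

theorem kaczmarz_convergence {n m : ℕ}
    (a : Fin m → EuclideanSpace ℝ (Fin n)) (b : Fin m → ℝ)
    (ha : ∀ j, a j ≠ 0) (hspan : Submodule.span ℝ (Set.range a) = ⊤)
    (xbar : EuclideanSpace ℝ (Fin n)) (hxbar : ∀ j, ⟪a j, xbar⟫ = b j) :
    (∀ x₀ : EuclideanSpace ℝ (Fin n),
      Filter.Tendsto
        (fun k => (fun x => (List.finRange m).foldl
            (fun z j => z + ((b j - ⟪a j, z⟫) / ‖a j‖ ^ 2) • a j) x)^[k] x₀)
        Filter.atTop (nhds xbar)) ∧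
    (∀ x : EuclideanSpace ℝ (Fin n), (∀ j, ⟪a j, x⟫ = b j) → x = xbar) :=
  kaczmarz_convergence_general a b hspan xbar hxbar
end
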